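/- arXiv:2011.10205 — 2 statements merged into one kernel-verified Lean document; each statement's English description precedes it below -/
import Mathlib

section
/- Let S ⊆ [n] be nonempty, let i ∈ S, let j ≠ j' be servers, and let 0 < ε ≤ p_{ij}. Let p' be the profile obtained from p by setting p'_{ij} = p_{ij} − ε and p'_{ij'} = p_{ij'} + ε, leaving all other coordinates unchanged. Then f(S | p') ≤ f(S | p) if and only if μ_j ∏_{r∈S\{i}}(1−p_{rj}) ≥ μ_{j'} ∏_{r∈S\{i}}(1−p_{rj'}), and the inequality f(S | p') < f(S | p) is strict if and only if μ_j ∏_{r∈S\{i}}(1−p_{rj}) > μ_{j'} ∏_{r∈S\{i}}(1−p_{rj'}). -/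
open Finset

/-- Membership of a vector in the probability simplex `Δ^{m-1}`. -/
def inSimplex {m : ℕ} (q : Fin m → ℝ) : Prop :=
  (∀ j, 0 ≤ q j) ∧ ∑ j, q j = 1

/-- `α(S | p, μ, S')`: expected number of packets cleared by the queues in `S` in one round,
when the queues in `S'` have priority over `S` and `S` has priority over all other queues. -/
noncomputable def alphaQ {n m : ℕ} (p : Fin n → Fin m → ℝ) (μ : Fin m → ℝ)
    (S S' : Finset (Fin n)) : ℝ :=
  ∑ j : Fin m, μ j * (∏ i ∈ S', (1 - p i j)) * (1 - ∏ i ∈ S, (1 - p i j))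

/-- `λ(S)`: total arrival rate of the queues in `S`. -/
def lamQ {n : ℕ} (lam : Fin n → ℝ) (S : Finset (Fin n)) : ℝ :=
  ∑ i ∈ S, lam i

/-- `f(S | p, μ, λ, S') = α(S | p, μ, S') / λ(S)`. -/
noncomputable def fQ {n m : ℕ} (p : Fin n → Fin m → ℝ) (μ : Fin m → ℝ) (lam : Fin n → ℝ)
    (S S' : Finset (Fin n)) : ℝ :=
  alphaQ p μ S S' / lamQ lam S

open scoped Classical in
/-- The union of all nonempty subsets `S ⊆ I` minimizing `f(· | p, μ, λ, S')` over the
nonempty subsets of `I` (the "largest-cardinality minimizer"). -/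
noncomputable def unionMin {n m : ℕ} (p : Fin n → Fin m → ℝ) (μ : Fin m → ℝ) (lam : Fin n → ℝ)
    (I S' : Finset (Fin n)) : Finset (Fin n) :=
  I.powerset.sup fun S =>
    if S.Nonempty ∧ ∀ T ∈ I.powerset, T.Nonempty → fQ p μ lam S S' ≤ fQ p μ lam T S' then S
    else ∅

/-- The group selected by one step of the rate algorithm on remaining queues `I`
with current (already discounted) service rates `μ`. -/
noncomputable def topSet {n m : ℕ} (p : Fin n → Fin m → ℝ) (μ : Fin m → ℝ) (lam : Fin n → ℝ)
    (I : Finset (Fin n)) : Finset (Fin n) :=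
  unionMin p μ lam I ∅

open scoped Classical in
/-- Fuelled version of the recursive rate algorithm: `I` is the set of remaining queues
and `μc` the current (discounted) service rates. -/
noncomputable def rateAux {n m : ℕ} (lam : Fin n → ℝ) (p : Fin n → Fin m → ℝ) :
    ℕ → Finset (Fin n) → (Fin m → ℝ) → Fin n → ℝ
  | 0, _, _, _ => 0
  | fuel + 1, I, μc, i =>
    if ∀ S ∈ I.powerset, S.Nonempty → 1 ≤ fQ p μc lam S ∅ then 0
    else if i ∈ topSet p μc lam I then 1 - fQ p μc lam (topSet p μc lam I) ∅
    else
      rateAux lam p fuel (I \ topSet p μc lam I)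
        (fun j => μc j * ∏ r ∈ topSet p μc lam I, (1 - p r j)) i

/-- The rate function `r : (Δ^{m-1})^n → [0,1]^n` computed by the recursive algorithm:
`rateQ lam μ p i` is the long-run aging rate `r_i(p)` of queue `i`. -/
noncomputable def rateQ {n m : ℕ} (lam : Fin n → ℝ) (μ : Fin m → ℝ)
    (p : Fin n → Fin m → ℝ) (i : Fin n) : ℝ :=
  rateAux lam p (n + 1) Finset.univ μ i

/-- State (remaining queues, discounted service rates) of the rate algorithm after `k` steps. -/
noncomputable def stateQ {n m : ℕ} (lam : Fin n → ℝ) (μ : Fin m → ℝ)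
    (p : Fin n → Fin m → ℝ) : ℕ → Finset (Fin n) × (Fin m → ℝ)
  | 0 => (Finset.univ, μ)
  | k + 1 =>
    ((stateQ lam μ p k).1 \ topSet p (stateQ lam μ p k).2 lam (stateQ lam μ p k).1,
      fun j => (stateQ lam μ p k).2 j *
        ∏ r ∈ topSet p (stateQ lam μ p k).2 lam (stateQ lam μ p k).1, (1 - p r j))

/-- `g_{k+1} = max {0, 1 - f_{k+1}}`: the aging rate of the `(k+1)`st group output by
the rate algorithm (`k = 0` corresponds to `S_1`). -/
noncomputable def gQ {n m : ℕ} (lam : Fin n → ℝ) (μ : Fin m → ℝ)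
    (p : Fin n → Fin m → ℝ) (k : ℕ) : ℝ :=
  max 0 (1 - fQ p (stateQ lam μ p k).2 lam
    (topSet p (stateQ lam μ p k).2 lam (stateQ lam μ p k).1) ∅)

/-- `f* = min_{∅ ≠ S ⊆ [n]} f(S | p)`. -/
noncomputable def fstarQ {n m : ℕ} (p : Fin n → Fin m → ℝ) (μ : Fin m → ℝ)
    (lam : Fin n → ℝ) : ℝ :=
  sInf ((fun S => fQ p μ lam S ∅) '' {S : Finset (Fin n) | S.Nonempty})

/-- A nonempty subset is tight if it minimizes `f(· | p)` over all nonempty subsets of `[n]`. -/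
def IsTight {n m : ℕ} (p : Fin n → Fin m → ℝ) (μ : Fin m → ℝ) (lam : Fin n → ℝ)
    (S : Finset (Fin n)) : Prop :=
  S.Nonempty ∧ ∀ T : Finset (Fin n), T.Nonempty → fQ p μ lam S ∅ ≤ fQ p μ lam T ∅

/-- `T` is a level subset at the next level, given that `W` is the union of all level
subsets at the previous levels: `T` is an inclusion-minimal nonempty subset of `K \ W`
with `f(T | W) = f*`, where `K` is the union of all tight subsets. -/
def IsLevelSet {n m : ℕ} (p : Fin n → Fin m → ℝ) (μ : Fin m → ℝ) (lam : Fin n → ℝ)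
    (W T : Finset (Fin n)) : Prop :=
  T.Nonempty ∧ T ⊆ unionMin p μ lam Finset.univ ∅ \ W ∧
    fQ p μ lam T W = fstarQ p μ lam ∧
    ∀ T' : Finset (Fin n), T'.Nonempty → T' ⊆ T →
      fQ p μ lam T' W = fstarQ p μ lam → T' = T

open scoped Classical in
/-- `levelUnion p μ lam ℓ` is the union of all level subsets at levels `≤ ℓ`
in the level partition of the union `K` of all tight subsets. -/
noncomputable def levelUnion {n m : ℕ} (p : Fin n → Fin m → ℝ) (μ : Fin m → ℝ)
    (lam : Fin n → ℝ) : ℕ → Finset (Fin n)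
  | 0 => ∅
  | ℓ + 1 =>
    levelUnion p μ lam ℓ ∪
      Finset.univ.powerset.sup fun T =>
        if IsLevelSet p μ lam (levelUnion p μ lam ℓ) T then T else ∅

/-- **Effect of shifting mass between two servers.** Let `i ∈ S`, `j ≠ j'`, and
`0 < ε ≤ p_{ij}`, and let `p'` be obtained from `p` by moving mass `ε` of queue `i`
from server `j` to server `j'`. Then `f(S | p') ≤ f(S | p)` iff
`μ_j ∏_{r ∈ S\{i}} (1 - p_{rj}) ≥ μ_{j'} ∏_{r ∈ S\{i}} (1 - p_{rj'})`, and the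
inequality is strict iff the latter is strict. -/
theorem statement18 {n m : ℕ} (hn : 1 ≤ n) (hm : 1 ≤ m)
    (lam : Fin n → ℝ) (μ : Fin m → ℝ) (p : Fin n → Fin m → ℝ)
    (hlam : ∀ i, 0 < lam i ∧ lam i < 1) (hmu : ∀ j, 0 ≤ μ j ∧ μ j ≤ 1)
    (hp : ∀ i, inSimplex (p i))
    (S : Finset (Fin n)) (hS : S.Nonempty) (i : Fin n) (hi : i ∈ S)
    (j j' : Fin m) (hjj' : j ≠ j') (ε : ℝ) (hε : 0 < ε) (hεp : ε ≤ p i j) :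
    (fQ (Function.update p i fun j0 =>
          if j0 = j then p i j - ε else if j0 = j' then p i j' + ε else p i j0)
        μ lam S ∅ ≤ fQ p μ lam S ∅ ↔
      μ j' * ∏ r ∈ S.erase i, (1 - p r j') ≤ μ j * ∏ r ∈ S.erase i, (1 - p r j)) ∧
    (fQ (Function.update p i fun j0 =>
          if j0 = j then p i j - ε else if j0 = j' then p i j' + ε else p i j0)
        μ lam S ∅ < fQ p μ lam S ∅ ↔
      μ j' * ∏ r ∈ S.erase i, (1 - p r j') < μ j * ∏ r ∈ S.erase i, (1 - p r j)) := by
  classical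
  set q : Fin m → ℝ := fun j0 => if j0 = j then p i j - ε else if j0 = j' then p i j' + ε
    else p i j0 with hq
  set p' := Function.update p i q with hp'
  have hlamS : 0 < lamQ lam S := Finset.sum_pos (fun r _ => (hlam r).1) hS
  have hCeq : ∀ j0 : Fin m, ∏ r ∈ S.erase i, (1 - p' r j0) = ∏ r ∈ S.erase i, (1 - p r j0) := by
    intro j0; refine Finset.prod_congr rfl fun r hr => ?_
    rw [hp', Function.update_of_ne (Finset.ne_of_mem_erase hr)]
  have hprod : ∀ (j0 : Fin m) (pp : Fin n → Fin m → ℝ),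
      ∏ r ∈ S, (1 - pp r j0) = (1 - pp i j0) * ∏ r ∈ S.erase i, (1 - pp r j0) :=
    fun j0 pp => (Finset.mul_prod_erase S _ hi).symm
  have hαdiff : alphaQ p' μ S ∅ - alphaQ p μ S ∅ =
      ε * (μ j' * ∏ r ∈ S.erase i, (1 - p r j') - μ j * ∏ r ∈ S.erase i, (1 - p r j)) := by
    unfold alphaQ
    rw [← Finset.sum_sub_distrib]
    have hterm : ∀ j0 ∈ (Finset.univ : Finset (Fin m)),
        μ j0 * (∏ r ∈ (∅ : Finset (Fin n)), (1 - p' r j0)) * (1 - ∏ r ∈ S, (1 - p' r j0))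
          - μ j0 * (∏ r ∈ (∅ : Finset (Fin n)), (1 - p r j0)) * (1 - ∏ r ∈ S, (1 - p r j0))
        = μ j0 * (q j0 - p i j0) * ∏ r ∈ S.erase i, (1 - p r j0) := by
      intro j0 _
      rw [hprod j0 p', hprod j0 p, hCeq j0, hp', Function.update_self]
      simp only [Finset.prod_empty]
      ring
    rw [Finset.sum_congr rfl hterm]
    rw [← Finset.sum_subset (Finset.subset_univ ({j, j'} : Finset (Fin m)))
      (fun x _ hx => by
        simp only [Finset.mem_insert, Finset.mem_singleton, not_or] at hx
        simp [hq, hx.1, hx.2])]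
    rw [Finset.sum_pair hjj']
    simp only [hq, if_pos rfl, if_neg hjj'.symm, if_true]
    ring
  have key : fQ p' μ lam S ∅ - fQ p μ lam S ∅ = (ε / lamQ lam S) *
      (μ j' * ∏ r ∈ S.erase i, (1 - p r j') - μ j * ∏ r ∈ S.erase i, (1 - p r j)) := by
    unfold fQ
    rw [div_sub_div_same, hαdiff]
    ring
  have hc : 0 < ε / lamQ lam S := div_pos hε hlamS
  constructor
  · rw [← sub_nonpos, key]
    constructor
    · intro h; nlinarith
    · intro h; nlinarith
  · rw [← sub_neg, key]
    constructor
    · intro h; nlinarith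
    · intro h; nlinarith
end

section
/- Consider the symmetric instance with n = m ≥ 1, server rates μ_j = 1 for all j ∈ [n], and arrival rates λ_i = λ ∈ (0,1) for all i ∈ [n], and let p be the uniform profile p_{ij} = 1/n for all i, j. Then [n] is the unique largest-cardinality minimizer of f(· | p) over nonempty subsets of [n], with f([n] | p) = (1 − (1 − 1/n)^n)/λ, the profile p is a Nash equilibrium of the patient queuing game with costs r, and r_i(p) = max{0, 1 − (1 − (1 − 1/n)^n)/λ} for every queue i. In particular, if λ > 1 − (1 − 1/n)^n then every queue has strictly positive cost r_i(p) > 0. -/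
open Finset

/-!
Write `q = 1 - 1/n`. Against uniform opponents, the row `v` of a single queue enters
`∑ j ∏_{i ∈ S} (1 - p_ij)` only through `∑ j (1 - v_j) = n - 1 = n q`, so for the uniform profile
and for every unilateral deviation from it, `f(S | ·) = n (1 - q^|S|) / (|S| λ)`. As
`(1 - q^s) / s` is `1 - q` times the average of the first `s` terms of the decreasing sequence
`q^i`, it decreases in `s`, so `f(S | ·)` is minimized by `S = [n]`; the rate algorithm therefore
stops after its first step, and the deviating queue gets exactly the cost
`max 0 (1 - f([n] | p))` it had before.
-/

section GeomSum

variable {R : Type*} [CommRing R] [LinearOrder R] [IsStrictOrderedRing R] {q : R}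

lemma card_mul_pow_le_geom_sum (hq0 : 0 ≤ q) (hq1 : q ≤ 1) {s N : ℕ} (hsN : s ≤ N) :
    (s : R) * q ^ N ≤ ∑ i ∈ range s, q ^ i := by
  calc (s : R) * q ^ N = ∑ _i ∈ range s, q ^ N := by simp
    _ ≤ ∑ i ∈ range s, q ^ i :=
      sum_le_sum fun i hi => pow_le_pow_of_le_one hq0 hq1 (by grind)

lemma card_mul_geom_sum_le (hq0 : 0 ≤ q) (hq1 : q ≤ 1) {s N : ℕ} (hsN : s ≤ N) :
    (s : R) * ∑ i ∈ range N, q ^ i ≤ N * ∑ i ∈ range s, q ^ i := by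
  induction N, hsN using Nat.le_induction with
  | base => rfl
  | succ N hsN ih =>
    have := card_mul_pow_le_geom_sum hq0 hq1 hsN
    rw [sum_range_succ]
    push_cast
    linarith

lemma card_mul_one_sub_pow_le (hq0 : 0 ≤ q) (hq1 : q ≤ 1) {s N : ℕ} (hsN : s ≤ N) :
    (s : R) * (1 - q ^ N) ≤ N * (1 - q ^ s) := by
  rw [← mul_neg_geom_sum, ← mul_neg_geom_sum, mul_left_comm, mul_left_comm (N : R)]
  exact mul_le_mul_of_nonneg_left (card_mul_geom_sum_le hq0 hq1 hsN) (sub_nonneg.2 hq1)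

end GeomSum

section RateAlgorithm

variable {n m : ℕ} {p : Fin n → Fin m → ℝ} {μ : Fin m → ℝ} {lam : Fin n → ℝ}

lemma unionMin_eq_self {I S' : Finset (Fin n)} (hI : I.Nonempty)
    (hmin : ∀ T ∈ I.powerset, T.Nonempty → fQ p μ lam I S' ≤ fQ p μ lam T S') :
    unionMin p μ lam I S' = I := by
  classical
  refine (Finset.sup_le fun S hS => ?_).antisymm ?_
  · split_ifs
    exacts [mem_powerset.1 hS, empty_subset I]
  · exact fun x hx => mem_sup.2 ⟨I, mem_powerset_self I, by rwa [if_pos ⟨hI, hmin⟩]⟩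

lemma rateQ_eq_of_fQ_univ_le (hmin : ∀ S : Finset (Fin n), S.Nonempty →
      fQ p μ lam univ ∅ ≤ fQ p μ lam S ∅) (i : Fin n) :
    rateQ lam μ p i = max 0 (1 - fQ p μ lam univ ∅) := by
  have hne : (univ : Finset (Fin n)).Nonempty := ⟨i, mem_univ i⟩
  have htop : topSet p μ lam univ = univ := unionMin_eq_self hne fun T _ hT => hmin T hT
  rw [rateQ, rateAux]
  split_ifs with hstop hi
  · have := hstop univ (mem_powerset_self _) hne
    rw [max_eq_left (by linarith)]
  · push Not at hstop
    obtain ⟨S, -, hS, hlt⟩ := hstop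
    rw [htop, max_eq_right (by linarith [hmin S hS])]
  · rw [htop] at hi
    exact absurd (mem_univ i) hi

end RateAlgorithm

section Symmetric

variable {n : ℕ}

lemma sum_prod_one_sub_update_uniform (i₀ : Fin n) {v : Fin n → ℝ} (hv : ∑ j, v j = 1)
    (S : Finset (Fin n)) :
    ∑ j, ∏ r ∈ S, (1 - Function.update (fun _ _ => 1 / (n : ℝ)) i₀ v r j)
      = n * (1 - 1 / (n : ℝ)) ^ S.card := by
  have hn : (n : ℝ) ≠ 0 := Nat.cast_ne_zero.2 (Fin.pos i₀).ne'
  have hrest : ∀ (T : Finset (Fin n)), i₀ ∉ T → ∀ j,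
      ∏ r ∈ T, (1 - Function.update (fun _ _ => 1 / (n : ℝ)) i₀ v r j)
        = (1 - 1 / (n : ℝ)) ^ T.card := fun T hT j =>
    prod_eq_pow_card fun r hr => by rw [Function.update_of_ne (ne_of_mem_of_not_mem hr hT)]
  by_cases hi : i₀ ∈ S
  · have hcard : S.card = (S.erase i₀).card + 1 := (card_erase_add_one hi).symm
    simp_rw [← mul_prod_erase S _ hi, Function.update_self, hrest _ (notMem_erase i₀ S),
      ← sum_mul, sum_sub_distrib, hv, hcard, pow_succ]
    simp only [sum_const, card_univ, Fintype.card_fin, nsmul_eq_mul, mul_one]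
    field_simp
  · simp only [hrest S hi, sum_const, card_univ, Fintype.card_fin, nsmul_eq_mul]

lemma fQ_update_uniform (i₀ : Fin n) {v : Fin n → ℝ} (hv : ∑ j, v j = 1) (lam₀ : ℝ)
    (S : Finset (Fin n)) :
    fQ (Function.update (fun _ _ => 1 / (n : ℝ)) i₀ v) (fun _ => 1) (fun _ => lam₀) S ∅
      = n * (1 - (1 - 1 / (n : ℝ)) ^ S.card) / (S.card * lam₀) := by
  simp only [fQ, alphaQ, lamQ, prod_empty, one_mul, mul_one, sum_sub_distrib,
    sum_prod_one_sub_update_uniform i₀ hv, sum_const, card_univ, Fintype.card_fin, nsmul_eq_mul]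
  ring

lemma fQ_update_uniform_univ_le (i₀ : Fin n) {v : Fin n → ℝ} (hv : ∑ j, v j = 1)
    {lam₀ : ℝ} (hlam₀ : 0 < lam₀) (S : Finset (Fin n)) (hS : S.Nonempty) :
    fQ (Function.update (fun _ _ => 1 / (n : ℝ)) i₀ v) (fun _ => 1) (fun _ => lam₀) univ ∅
      ≤ fQ (Function.update (fun _ _ => 1 / (n : ℝ)) i₀ v) (fun _ => 1) (fun _ => lam₀) S ∅ := by
  have hn : (0 : ℝ) < n := Nat.cast_pos.2 (Fin.pos i₀)
  have hs : (0 : ℝ) < S.card := Nat.cast_pos.2 hS.card_pos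
  have hq1 : 1 / (n : ℝ) ≤ 1 := (div_le_one hn).2 (Nat.one_le_cast.2 (Fin.pos i₀))
  have key := card_mul_one_sub_pow_le (sub_nonneg.2 hq1) (sub_le_self 1 (by positivity))
    (card_le_univ S)
  rw [Fintype.card_fin] at key
  rw [fQ_update_uniform i₀ hv, fQ_update_uniform i₀ hv, card_univ, Fintype.card_fin,
    div_le_div_iff₀ (by positivity) (by positivity)]
  nlinarith [mul_le_mul_of_nonneg_left key (mul_nonneg hn.le (mul_nonneg hn.le hlam₀.le))]

end Symmetric

/-- **Tightness of the `e/(e-1)` bound: the symmetric instance.** With `n = m ≥ 1`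
servers of rate `1`, all arrival rates equal to `λ ∈ (0,1)`, and the uniform profile
`p_{ij} = 1/n`: the whole set `[n]` is the unique largest-cardinality minimizer of
`f(· | p)` (it is a minimizer and equals the union of all minimizers), with
`f([n] | p) = (1 - (1 - 1/n)^n)/λ`; the uniform profile is a Nash equilibrium; every
queue has cost `r_i(p) = max {0, 1 - (1 - (1 - 1/n)^n)/λ}`; and in particular if
`λ > 1 - (1 - 1/n)^n` then every queue has strictly positive cost. -/
theorem statement19 {n : ℕ} (hn : 1 ≤ n) (lam0 : ℝ) (hlam0 : 0 < lam0 ∧ lam0 < 1) :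
    let lam : Fin n → ℝ := fun _ => lam0
    let μ : Fin n → ℝ := fun _ => 1
    let p : Fin n → Fin n → ℝ := fun _ _ => 1 / (n : ℝ)
    unionMin p μ lam Finset.univ ∅ = Finset.univ ∧
    (∀ S : Finset (Fin n), S.Nonempty →
      fQ p μ lam Finset.univ ∅ ≤ fQ p μ lam S ∅) ∧
    fQ p μ lam Finset.univ ∅ = (1 - (1 - 1 / (n : ℝ)) ^ n) / lam0 ∧
    (∀ (i : Fin n) (q : Fin n → ℝ), inSimplex q →
      rateQ lam μ p i ≤ rateQ lam μ (Function.update p i q) i) ∧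
    (∀ i : Fin n, rateQ lam μ p i = max 0 (1 - (1 - (1 - 1 / (n : ℝ)) ^ n) / lam0)) ∧
    (1 - (1 - 1 / (n : ℝ)) ^ n < lam0 → ∀ i : Fin n, 0 < rateQ lam μ p i) := by
  intro lam μ p
  obtain ⟨hlam0, -⟩ := hlam0
  have hn0 : (n : ℝ) ≠ 0 := Nat.cast_ne_zero.2 (by omega)
  have i₀ : Fin n := ⟨0, hn⟩
  have hrow : ∀ i, ∑ j, p i j = 1 := fun i => by simp [p, hn0]
  have hfuniv : fQ p μ lam univ ∅ = (1 - (1 - 1 / (n : ℝ)) ^ n) / lam0 := by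
    rw [← Function.update_eq_self i₀ p, fQ_update_uniform i₀ (hrow i₀), card_univ,
      Fintype.card_fin, mul_div_mul_left _ _ hn0]
  have hmin : ∀ S : Finset (Fin n), S.Nonempty → fQ p μ lam univ ∅ ≤ fQ p μ lam S ∅ := by
    have := fQ_update_uniform_univ_le (v := p i₀) i₀ (hrow i₀) hlam0
    rwa [Function.update_eq_self] at this
  have hdev : ∀ i v, ∑ j, v j = 1 → rateQ lam μ (Function.update p i v) i
      = max 0 (1 - (1 - (1 - 1 / (n : ℝ)) ^ n) / lam0) := fun i v hv => by
    rw [rateQ_eq_of_fQ_univ_le (fQ_update_uniform_univ_le i hv hlam0) i, fQ_update_uniform i hv,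
      card_univ, Fintype.card_fin, mul_div_mul_left _ _ hn0]
  have hrate : ∀ i, rateQ lam μ p i = max 0 (1 - (1 - (1 - 1 / (n : ℝ)) ^ n) / lam0) :=
    fun i => by simpa only [Function.update_eq_self] using hdev i (p i) (hrow i)
  refine ⟨unionMin_eq_self ⟨i₀, mem_univ _⟩ fun T _ hT => hmin T hT, hmin, hfuniv,
    fun i v hv => (hrate i).trans_le (hdev i v hv.2).ge, hrate, fun hlt i => ?_⟩
  rw [hrate i]
  exact lt_max_of_lt_right (by rw [sub_pos, div_lt_one hlam0]; exact hlt)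
end
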